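/- (Example 8.5) The formula ⊓x⊔y(y = f(x)) is not provable in CL12, where f is a unary function letter and = is the logical identity predicate, even though its classical counterpart ∀x∃y(y = f(x)) is classically valid and hence provable in CL12. -/

import Mathlib

namespace CL12

/-- Terms: variables, constants (named by natural numbers), and applications
of function letters (a function letter is a pair of a name and an arity). -/
inductive Term : Type
  | var : ℕ → Term
  | const : ℕ → Term
  | func : (f : ℕ) → (n : ℕ) → (Fin n → Term) → Term

/-- Replace every occurrence of the variable `x` by the term `t`. -/
def Term.subst (x : ℕ) (t : Term) : Term → Term
  | .var y => if y = x then t else .var y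
  | .const c => .const c
  | .func f n g => .func f n fun i => Term.subst x t (g i)

/-- The set of variables occurring in a term. -/
def Term.vars : Term → Finset ℕ
  | .var y => {y}
  | .const _ => ∅
  | .func _ n g => Finset.univ.biUnion fun i : Fin n => (g i).vars

/-- A classical first-order structure interpreting constants, function letters
and nonlogical predicate letters (identity is interpreted as actual identity). -/
structure Interp where
  U : Type
  hU : Nonempty U
  constI : ℕ → U
  funcI : (f n : ℕ) → (Fin n → U) → U
  predI : (p n : ℕ) → (Fin n → U) → Prop

/-- Evaluation of terms under an interpretation and a valuation. -/
def Term.eval (I : Interp) (e : ℕ → I.U) : Term → I.U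
  | .var y => e y
  | .const c => I.constI c
  | .func f n g => I.funcI f n fun i => (g i).eval I e

/-- Formulas of the language of CL12.  Negation is officially applied to atoms
only, so atoms come in a positive (`pos`, `eq`) and a negative (`neg`, `neq`)
form.  `and`/`or` are the parallel connectives ∧/∨, `cand`/`cor` the choice
connectives ⊓/⊔, `all`/`ex` the blind quantifiers ∀/∃ and `call`/`cex` the
choice quantifiers ⊓x/⊔x. -/
inductive Formula : Type
  | top : Formula
  | bot : Formula
  | pos (p n : ℕ) (args : Fin n → Term) : Formula
  | neg (p n : ℕ) (args : Fin n → Term) : Formula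
  | eq (t₁ t₂ : Term) : Formula
  | neq (t₁ t₂ : Term) : Formula
  | and (A B : Formula) : Formula
  | or (A B : Formula) : Formula
  | cand (A B : Formula) : Formula
  | cor (A B : Formula) : Formula
  | all (x : ℕ) (A : Formula) : Formula
  | ex (x : ℕ) (A : Formula) : Formula
  | call (x : ℕ) (A : Formula) : Formula
  | cex (x : ℕ) (A : Formula) : Formula

/-- Negation of an arbitrary formula, as an abbreviation via the De Morgan
dualities. -/
def Formula.negation : Formula → Formula
  | .top => .bot
  | .bot => .top
  | .pos p n args => .neg p n args
  | .neg p n args => .pos p n args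
  | .eq a b => .neq a b
  | .neq a b => .eq a b
  | .and A B => .or A.negation B.negation
  | .or A B => .and A.negation B.negation
  | .cand A B => .cor A.negation B.negation
  | .cor A B => .cand A.negation B.negation
  | .all x A => .ex x A.negation
  | .ex x A => .all x A.negation
  | .call x A => .cex x A.negation
  | .cex x A => .call x A.negation

/-- `E → F` abbreviates `¬E ∨ F`. -/
def Formula.impl (A B : Formula) : Formula := .or A.negation B

/-- Substitution of the term `t` for all free occurrences of the variable `x`. -/
def Formula.subst (x : ℕ) (t : Term) : Formula → Formula
  | .top => .top
  | .bot => .bot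
  | .pos p n args => .pos p n fun i => Term.subst x t (args i)
  | .neg p n args => .neg p n fun i => Term.subst x t (args i)
  | .eq a b => .eq (Term.subst x t a) (Term.subst x t b)
  | .neq a b => .neq (Term.subst x t a) (Term.subst x t b)
  | .and A B => .and (A.subst x t) (B.subst x t)
  | .or A B => .or (A.subst x t) (B.subst x t)
  | .cand A B => .cand (A.subst x t) (B.subst x t)
  | .cor A B => .cor (A.subst x t) (B.subst x t)
  | .all y A => if y = x then .all y A else .all y (A.subst x t)
  | .ex y A => if y = x then .ex y A else .ex y (A.subst x t)
  | .call y A => if y = x then .call y A else .call y (A.subst x t)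
  | .cex y A => if y = x then .cex y A else .cex y (A.subst x t)

/-- All variables occurring (free or bound) in a formula. -/
def Formula.vars : Formula → Finset ℕ
  | .top => ∅
  | .bot => ∅
  | .pos _ n args => Finset.univ.biUnion fun i : Fin n => (args i).vars
  | .neg _ n args => Finset.univ.biUnion fun i : Fin n => (args i).vars
  | .eq a b => a.vars ∪ b.vars
  | .neq a b => a.vars ∪ b.vars
  | .and A B => A.vars ∪ B.vars
  | .or A B => A.vars ∪ B.vars
  | .cand A B => A.vars ∪ B.vars
  | .cor A B => A.vars ∪ B.vars
  | .all x A => insert x A.vars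
  | .ex x A => insert x A.vars
  | .call x A => insert x A.vars
  | .cex x A => insert x A.vars

/-- Variables having a bound occurrence in a formula. -/
def Formula.boundVars : Formula → Finset ℕ
  | .top => ∅
  | .bot => ∅
  | .pos _ _ _ => ∅
  | .neg _ _ _ => ∅
  | .eq _ _ => ∅
  | .neq _ _ => ∅
  | .and A B => A.boundVars ∪ B.boundVars
  | .or A B => A.boundVars ∪ B.boundVars
  | .cand A B => A.boundVars ∪ B.boundVars
  | .cor A B => A.boundVars ∪ B.boundVars
  | .all x A => insert x A.boundVars
  | .ex x A => insert x A.boundVars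
  | .call x A => insert x A.boundVars
  | .cex x A => insert x A.boundVars

/-- A formula is elementary iff it contains no choice operators. -/
def Formula.IsElementary : Formula → Prop
  | .top => True
  | .bot => True
  | .pos _ _ _ => True
  | .neg _ _ _ => True
  | .eq _ _ => True
  | .neq _ _ => True
  | .and A B => A.IsElementary ∧ B.IsElementary
  | .or A B => A.IsElementary ∧ B.IsElementary
  | .cand _ _ => False
  | .cor _ _ => False
  | .all _ A => A.IsElementary
  | .ex _ A => A.IsElementary
  | .call _ _ => False
  | .cex _ _ => False

/-- The elementarization ‖F‖ of a formula: all ⊔- and ⊔x-subformulas are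
replaced by ⊥, and all ⊓- and ⊓x-subformulas by ⊤. -/
def Formula.elz : Formula → Formula
  | .top => .top
  | .bot => .bot
  | .pos p n args => .pos p n args
  | .neg p n args => .neg p n args
  | .eq a b => .eq a b
  | .neq a b => .neq a b
  | .and A B => .and A.elz B.elz
  | .or A B => .or A.elz B.elz
  | .cand _ _ => .top
  | .cor _ _ => .bot
  | .all x A => .all x A.elz
  | .ex x A => .ex x A.elz
  | .call _ _ => .top
  | .cex _ _ => .bot

/-- Classical truth of a formula under an interpretation and a valuation
(identity is interpreted as actual identity; the choice operators, which never
occur in the elementary formulas this notion is applied to, are read as their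
parallel/blind counterparts). -/
def Formula.truth (I : Interp) : (ℕ → I.U) → Formula → Prop
  | _, .top => True
  | _, .bot => False
  | e, .pos p n args => I.predI p n fun i => (args i).eval I e
  | e, .neg p n args => ¬ I.predI p n fun i => (args i).eval I e
  | e, .eq a b => a.eval I e = b.eval I e
  | e, .neq a b => a.eval I e ≠ b.eval I e
  | e, .and A B => A.truth I e ∧ B.truth I e
  | e, .or A B => A.truth I e ∨ B.truth I e
  | e, .cand A B => A.truth I e ∧ B.truth I e
  | e, .cor A B => A.truth I e ∨ B.truth I e
  | e, .all x A => ∀ u : I.U, A.truth I (Function.update e x u)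
  | e, .ex x A => ∃ u : I.U, A.truth I (Function.update e x u)
  | e, .call x A => ∀ u : I.U, A.truth I (Function.update e x u)
  | e, .cex x A => ∃ u : I.U, A.truth I (Function.update e x u)

/-- Classical validity; by Gödel's completeness theorem this is the same as
provability in classical first-order calculus with constants, function letters
and =, where = is the logical identity predicate. -/
def Valid (F : Formula) : Prop := ∀ (I : Interp) (e : ℕ → I.U), F.truth I e

/-- The winner of the empty run of the game `F*` on valuation `e`: the
proposition that the empty run is ⊤-won.  Atoms are resolved by truth, the
empty run of `A ⊓ B` and `⊓x A` is ⊤-won, the empty run of `A ⊔ B` and `⊔x A`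
is ⊥-won. -/
def Formula.wn0 (I : Interp) : (ℕ → I.U) → Formula → Prop
  | _, .top => True
  | _, .bot => False
  | e, .pos p n args => I.predI p n fun i => (args i).eval I e
  | e, .neg p n args => ¬ I.predI p n fun i => (args i).eval I e
  | e, .eq a b => a.eval I e = b.eval I e
  | e, .neq a b => a.eval I e ≠ b.eval I e
  | e, .and A B => A.wn0 I e ∧ B.wn0 I e
  | e, .or A B => A.wn0 I e ∨ B.wn0 I e
  | _, .cand _ _ => True
  | _, .cor _ _ => False
  | e, .all x A => ∀ u : I.U, A.wn0 I (Function.update e x u)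
  | e, .ex x A => ∃ u : I.U, A.wn0 I (Function.update e x u)
  | _, .call _ _ => True
  | _, .cex _ _ => False

/-- A sequent E₁,…,Eₙ ⊸ F. -/
structure Sequent where
  ant : List Formula
  suc : Formula

/-- The conjunction E₁ ∧ … ∧ Eₙ of a list of formulas (⊤ when the list is empty). -/
def listAnd : List Formula → Formula
  | [] => .top
  | [A] => A
  | A :: l => .and A (listAnd l)

/-- The elementarization ‖E₁‖∧…∧‖Eₙ‖ → ‖F‖ of a sequent. -/
def Sequent.elz (S : Sequent) : Formula :=
  (listAnd (S.ant.map Formula.elz)).impl S.suc.elz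

/-- A sequent is stable iff its elementarization is classically valid
(equivalently, provable in classical first-order calculus with constants,
function letters and =). -/
def Stable (S : Sequent) : Prop := Valid S.elz

/-- All variables occurring in a sequent. -/
def Sequent.vars (S : Sequent) : Finset ℕ :=
  S.ant.foldr (fun A acc => A.vars ∪ acc) S.suc.vars

/-- Variables having a bound occurrence in a sequent. -/
def Sequent.boundVars (S : Sequent) : Finset ℕ :=
  S.ant.foldr (fun A acc => A.boundVars ∪ acc) S.suc.boundVars

/-- The winner of the empty run of a sequent E₁,…,Eₙ ⊸ F: it is ⊤-won iff the
empty run of some Eᵢ is ⊥-won or the empty run of F is ⊤-won. -/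
def Sequent.wn0 (S : Sequent) (I : Interp) (e : ℕ → I.U) : Prop :=
  (∃ E ∈ S.ant, ¬ E.wn0 I e) ∨ S.suc.wn0 I e

/-- A context: a formula with a single hole which is a surface position, i.e.,
not in the scope of any choice operator.  `C.fill H` is the formula `F[H]`
having the indicated surface occurrence of `H`. -/
inductive Ctx : Type
  | hole : Ctx
  | andL (C : Ctx) (B : Formula) : Ctx
  | andR (A : Formula) (C : Ctx) : Ctx
  | orL (C : Ctx) (B : Formula) : Ctx
  | orR (A : Formula) (C : Ctx) : Ctx
  | all (x : ℕ) (C : Ctx) : Ctx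
  | ex (x : ℕ) (C : Ctx) : Ctx

/-- Filling the hole of a context with a formula. -/
def Ctx.fill : Ctx → Formula → Formula
  | .hole, H => H
  | .andL C B, H => .and (C.fill H) B
  | .andR A C, H => .and A (C.fill H)
  | .orL C B, H => .or (C.fill H) B
  | .orR A C, H => .or A (C.fill H)
  | .all x C, H => .all x (C.fill H)
  | .ex x C, H => .ex x (C.fill H)

/-- The hole of the context is not in the scope of ∧. -/
def Ctx.noAnd : Ctx → Prop
  | .hole => True
  | .andL _ _ => False
  | .andR _ _ => False
  | .orL C _ => C.noAnd
  | .orR _ C => C.noAnd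
  | .all _ C => C.noAnd
  | .ex _ C => C.noAnd

/-- The hole of the context is not in the scope of ∨. -/
def Ctx.noOr : Ctx → Prop
  | .hole => True
  | .andL C _ => C.noOr
  | .andR _ C => C.noOr
  | .orL _ _ => False
  | .orR _ _ => False
  | .all _ C => C.noOr
  | .ex _ C => C.noOr

/-- In the ⊔x-Choose and ⊓x-Choose rules, the term chosen for `x` must be
either a constant, or a variable with no bound occurrences in the premise. -/
def GoodTerm (t : Term) (premise : Sequent) : Prop :=
  (∃ c, t = Term.const c) ∨ (∃ y, t = Term.var y ∧ y ∉ premise.boundVars)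

/-- CL12-provability, defined by the six rules ⊔-Choose, ⊓-Choose, ⊔x-Choose,
⊓x-Choose, Replicate and Wait.  In the Wait rule, the predicate `P` carves out
the set of premises Y₁,…,Yₙ of the rule, all of which are required to be
provable. -/
inductive Provable : Sequent → Prop
  | corChoose (Γ : List Formula) (C : Ctx) (H0 H1 : Formula) (i : Bool) :
      Provable ⟨Γ, C.fill (bif i then H1 else H0)⟩ →
      Provable ⟨Γ, C.fill (.cor H0 H1)⟩
  | candChoose (Γ Δ : List Formula) (C : Ctx) (H0 H1 F : Formula) (i : Bool) :
      Provable ⟨Γ ++ C.fill (bif i then H1 else H0) :: Δ, F⟩ →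
      Provable ⟨Γ ++ C.fill (.cand H0 H1) :: Δ, F⟩
  | cexChoose (Γ : List Formula) (C : Ctx) (x : ℕ) (H : Formula) (t : Term) :
      GoodTerm t ⟨Γ, C.fill (H.subst x t)⟩ →
      Provable ⟨Γ, C.fill (H.subst x t)⟩ →
      Provable ⟨Γ, C.fill (.cex x H)⟩
  | callChoose (Γ Δ : List Formula) (C : Ctx) (x : ℕ) (H F : Formula) (t : Term) :
      GoodTerm t ⟨Γ ++ C.fill (H.subst x t) :: Δ, F⟩ →
      Provable ⟨Γ ++ C.fill (H.subst x t) :: Δ, F⟩ →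
      Provable ⟨Γ ++ C.fill (.call x H) :: Δ, F⟩
  | replicate (Γ Δ : List Formula) (E F : Formula) :
      Provable ⟨Γ ++ E :: Δ ++ [E], F⟩ →
      Provable ⟨Γ ++ E :: Δ, F⟩
  | wait (X : Sequent) (P : Sequent → Prop)
      (hstable : Stable X)
      (hcand : ∀ (C : Ctx) (H0 H1 : Formula), X.suc = C.fill (.cand H0 H1) →
          P ⟨X.ant, C.fill H0⟩ ∧ P ⟨X.ant, C.fill H1⟩)
      (hcor : ∀ (Γ Δ : List Formula) (C : Ctx) (H0 H1 : Formula),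
          X.ant = Γ ++ C.fill (.cor H0 H1) :: Δ →
          P ⟨Γ ++ C.fill H0 :: Δ, X.suc⟩ ∧ P ⟨Γ ++ C.fill H1 :: Δ, X.suc⟩)
      (hcall : ∀ (C : Ctx) (x : ℕ) (H : Formula), X.suc = C.fill (.call x H) →
          ∃ y, y ∉ X.vars ∧ P ⟨X.ant, C.fill (H.subst x (.var y))⟩)
      (hcex : ∀ (Γ Δ : List Formula) (C : Ctx) (x : ℕ) (H : Formula),
          X.ant = Γ ++ C.fill (.cex x H) :: Δ →
          ∃ y, y ∉ X.vars ∧ P ⟨Γ ++ C.fill (H.subst x (.var y)) :: Δ, X.suc⟩)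
      (hprov : ∀ Y, P Y → Provable Y) :
      Provable X

/-! In `⊸ ⊓x⊔y(y = f(x))` only Wait applies, and its premise `⊸ ⊔y(y = f(v))` is
unstable, so it can only come from ⊔x-Choose with a constant or variable `t`.
The resulting `⊸ t = f(v)` is unstable as well and no rule concludes it.  Both
instabilities are witnessed by one two-element model in which every constant
differs from every function value. -/

theorem Term.eval_update_of_not_mem_vars (I : Interp) (e : ℕ → I.U) (y : ℕ) (u : I.U) :
    ∀ {t : Term}, y ∉ t.vars → t.eval I (Function.update e y u) = t.eval I e
  | .var z, h => Function.update_of_ne (by simpa [Term.vars, eq_comm] using h) _ _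
  | .const _, _ => rfl
  | .func f n g, h => by
    simp only [Term.vars, Finset.mem_biUnion, Finset.mem_univ, true_and, not_exists] at h
    simp only [Term.eval, Term.eval_update_of_not_mem_vars I e y u (h _)]

theorem Valid.all {F : Formula} (hF : Valid F) (x : ℕ) : Valid (.all x F) :=
  fun I e u => hF I (Function.update e x u)

theorem valid_ex_eq_of_not_mem_vars {y : ℕ} {t : Term} (hy : y ∉ t.vars) :
    Valid (.ex y (.eq (.var y) t)) := fun I e =>
  ⟨t.eval I e, by
    simp only [Formula.truth, Term.eval, Function.update_self,
      Term.eval_update_of_not_mem_vars I e y _ hy]⟩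

theorem Formula.IsElementary.elz_eq : ∀ {F : Formula}, F.IsElementary → F.elz = F
  | .top, _ | .bot, _ | .pos .., _ | .neg .., _ | .eq .., _ | .neq .., _ => rfl
  | .and _ _, ⟨hA, hB⟩ | .or _ _, ⟨hA, hB⟩ => by simp only [Formula.elz, hA.elz_eq, hB.elz_eq]
  | .all _ A, h | .ex _ A, h => by simp only [Formula.elz, elz_eq (F := A) h]

theorem Ctx.isElementary_of_fill : ∀ {C : Ctx} {H : Formula},
    (C.fill H).IsElementary → H.IsElementary
  | .hole, _, h => h
  | .andL _ _, _, h | .orL _ _, _, h => isElementary_of_fill h.1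
  | .andR _ _, _, h | .orR _ _, _, h => isElementary_of_fill h.2
  | .all _ _, _, h | .ex _ _, _, h => isElementary_of_fill (C := ‹_›) h

theorem stable_nil_iff {F : Formula} : Stable ⟨[], F⟩ ↔ Valid F.elz := by
  simp [Stable, Valid, Sequent.elz, listAnd, Formula.impl, Formula.negation, Formula.truth]

theorem provable_of_stable {X : Sequent} (hant : ∀ E ∈ X.ant, E.IsElementary)
    (hsuc : X.suc.IsElementary) (hX : Stable X) : Provable X := by
  refine .wait X (fun _ => False) hX ?_ ?_ ?_ ?_ fun _ => False.elim
  · intro C H0 H1 h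
    exact False.elim (Ctx.isElementary_of_fill (H := .cand H0 H1) (h ▸ hsuc))
  · intro Γ Δ C H0 H1 h
    exact False.elim (Ctx.isElementary_of_fill (C := C) (H := .cor H0 H1) (hant _ (by simp [h])))
  · intro C x H h
    exact False.elim (Ctx.isElementary_of_fill (H := .call x H) (h ▸ hsuc))
  · intro Γ Δ C x H h
    exact False.elim (Ctx.isElementary_of_fill (C := C) (H := .cex x H) (hant _ (by simp [h])))

/-- Under the all-`false` valuation, no constant or variable equals a function value. -/
def boolModel : Interp := ⟨Bool, ⟨true⟩, fun _ => false, fun _ _ _ => true, fun _ _ _ => False⟩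

/-- The succedents reachable from `⊸ ⊓x⊔y(y = f(x))` by reading CL12-rules upwards. -/
inductive Residue : Formula → Prop
  | call (g : Fin 1 → Term) : Residue (.call 0 (.cex 1 (.eq (.var 1) (.func 0 1 g))))
  | cex (g : Fin 1 → Term) : Residue (.cex 1 (.eq (.var 1) (.func 0 1 g)))
  | eqConst (c : ℕ) (g : Fin 1 → Term) : Residue (.eq (.const c) (.func 0 1 g))
  | eqVar (z : ℕ) (g : Fin 1 → Term) : Residue (.eq (.var z) (.func 0 1 g))

theorem Provable.not_residue {S : Sequent} (hS : Provable S) (hant : S.ant = []) :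
    ¬ Residue S.suc := by
  induction hS with
  | corChoose Γ C H0 H1 i _ _ =>
    intro h
    cases C <;> cases h
  | candChoose | callChoose | replicate => simp at hant
  | cexChoose Γ C x H t ht _ ih =>
    intro h
    cases C <;> cases h
    apply ih hant
    rcases ht with ⟨c, rfl⟩ | ⟨z, rfl, -⟩
    · simpa [Ctx.fill, Formula.subst, Term.subst] using Residue.eqConst c _
    · simpa [Ctx.fill, Formula.subst, Term.subst] using Residue.eqVar z _
  | wait X P hX _ _ hcall _ _ ih =>
    obtain ⟨ant, suc⟩ := X
    subst hant
    intro h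
    have hval := stable_nil_iff.mp hX boolModel fun _ => false
    cases h with
    | call g =>
      obtain ⟨y, -, hP⟩ := hcall .hole _ _ rfl
      exact ih _ hP rfl (by simpa [Ctx.fill, Formula.subst, Term.subst] using Residue.cex _)
    | cex g => exact hval
    | eqConst c g | eqVar z g => exact Bool.false_ne_true hval

/-- Example 8.5: ⊓x⊔y(y = f(x)) is not provable in CL12, where f is a unary
function letter, even though its classical counterpart ∀x∃y(y = f(x)) is
classically valid and hence provable in CL12. -/
theorem example_8_5 :
    (¬ Provable ⟨[],
        .call 0 (.cex 1 (.eq (Term.var 1) (Term.func 0 1 ![Term.var 0])))⟩) ∧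
    Valid (.all 0 (.ex 1 (.eq (Term.var 1) (Term.func 0 1 ![Term.var 0])))) ∧
    Provable ⟨[],
      .all 0 (.ex 1 (.eq (Term.var 1) (Term.func 0 1 ![Term.var 0])))⟩ := by
  have hvalid : Valid (.all 0 (.ex 1 (.eq (Term.var 1) (Term.func 0 1 ![Term.var 0])))) :=
    (valid_ex_eq_of_not_mem_vars (by simp [Term.vars])).all 0
  have helem :
      (Formula.all 0 (.ex 1 (.eq (Term.var 1) (Term.func 0 1 ![Term.var 0])))).IsElementary :=
    trivial
  exact ⟨fun h => h.not_residue rfl (.call _), hvalid,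
    provable_of_stable (by simp) helem (stable_nil_iff.mpr (helem.elz_eq ▸ hvalid))⟩

end CL12
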